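/- arXiv:1912.01253 — 7 statements merged into one kernel-verified Lean document; each statement's English description precedes it below -/
import Mathlib

section
/- For every subset U of ℝ^n, the tropical convex hull of U equals the intersection over j = 0, 1, …, n of the Minkowski sums U + S_j; that is, tconv(U) = ⋂_{j=0}^{n} (U + S_j). -/
open Pointwise

/-- A set `U ⊆ ℝ^n` is tropically convex (min-plus convention). -/
def TropConvex {n : ℕ} (U : Set (Fin n → ℝ)) : Prop :=
  ∀ x ∈ U, ∀ y ∈ U, ∀ a b : ℝ, min a b = 0 →
    (fun i => min (a + x i) (b + y i)) ∈ U

/-- The tropical convex hull: the intersection of all tropically convex sets containing `U`. -/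
def tconv {n : ℕ} (U : Set (Fin n → ℝ)) : Set (Fin n → ℝ) :=
  ⋂₀ {V | TropConvex V ∧ U ⊆ V}

/-- The sectors `S_0, S_1, …, S_n` of `ℝ^n`, indexed by `j : Fin (n+1)`. -/
def sector {n : ℕ} (j : Fin (n + 1)) : Set (Fin n → ℝ) :=
  if _h : (j : ℕ) = 0 then {x | ∀ i, x i ≤ 0}
  else {x | 0 ≤ x ⟨(j : ℕ) - 1, by have := j.isLt; omega⟩ ∧
            ∀ i, x i ≤ x ⟨(j : ℕ) - 1, by have := j.isLt; omega⟩}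

/-!
A point `x` of `⋂ⱼ (U + Sⱼ)` can be written as `x = u₀ + s₀ = vₖ + sₖ` with `u₀, vₖ ∈ U`,
`s₀ ∈ S₀` and `sₖ ∈ S_{k+1}`, and then `x = min(u₀, minₖ (sₖ k + vₖ))` coordinatewise: every
term dominates `x`, and the `k`-th one equals `x` at coordinate `k`. Since `sₖ k ≥ 0`, this
tropical combination lies in every tropically convex set containing `U`. Conversely each
`U + Sⱼ` contains `U` and is tropically convex: the tropical combination of `u + s` and `v + t`
lies in `u + Sⱼ` or in `v + Sⱼ`, depending on which term realises the minimum at the apex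
coordinate of `Sⱼ`.
-/

open Set

section

variable {n : ℕ}

lemma mem_sector_zero {x : Fin n → ℝ} : x ∈ sector 0 ↔ ∀ i, x i ≤ 0 := by
  simp [sector]

lemma mem_sector_succ {k : Fin n} {x : Fin n → ℝ} :
    x ∈ sector k.succ ↔ 0 ≤ x k ∧ ∀ i, x i ≤ x k := by
  simp [sector]

lemma zero_mem_sector (j : Fin (n + 1)) : (0 : Fin n → ℝ) ∈ sector j := by
  cases j using Fin.cases with
  | zero => simp [mem_sector_zero]
  | succ k => simp [mem_sector_succ]

lemma subset_add_sector (U : Set (Fin n → ℝ)) (j : Fin (n + 1)) : U ⊆ U + sector j :=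
  fun u hu => ⟨u, hu, 0, zero_mem_sector j, add_zero u⟩

lemma TropConvex.of_symm {V : Set (Fin n → ℝ)}
    (h : ∀ x ∈ V, ∀ y ∈ V, ∀ a b : ℝ, min a b = 0 → a ≤ b →
      (fun i => min (a + x i) (b + y i)) ∈ V) :
    TropConvex V := by
  intro x hx y hy a b hab
  rcases le_total a b with hle | hle
  · exact h x hx y hy a b hab hle
  · simpa only [min_comm] using h y hy x hx b a (by rwa [min_comm]) hle

lemma tropConvex_add_sector_zero (U : Set (Fin n → ℝ)) : TropConvex (U + sector 0) := by
  refine TropConvex.of_symm fun x hx y _ a b hab hle => ?_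
  obtain ⟨u, hu, s, hs, hus⟩ := hx
  have ha : a = 0 := by rwa [min_eq_left hle] at hab
  refine ⟨u, hu, _ - u, mem_sector_zero.2 fun i => ?_, add_sub_cancel u _⟩
  have hxi : u i + s i = x i := congrFun hus i
  simp only [Pi.sub_apply, ha]
  linarith [mem_sector_zero.1 hs i, min_le_left (0 + x i) (b + y i)]

lemma tropConvex_add_sector_succ (U : Set (Fin n → ℝ)) (k : Fin n) :
    TropConvex (U + sector k.succ) := by
  intro x hx y hy a b hab
  wlog hk : a + x k ≤ b + y k generalizing x y a b
  · simpa only [min_comm] using this y hy x hx b a (by rwa [min_comm]) (le_of_not_ge hk)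
  obtain ⟨u, hu, s, hs, hus⟩ := hx
  have hxi : ∀ i, u i + s i = x i := fun i => congrFun hus i
  have ha : 0 ≤ a := hab ▸ min_le_left a b
  have hsk := mem_sector_succ.1 hs
  refine ⟨u, hu, _ - u, mem_sector_succ.2 ⟨?_, fun i => ?_⟩, add_sub_cancel u _⟩
  · simp only [Pi.sub_apply, min_eq_left hk]
    linarith [hsk.1, hxi k]
  · simp only [Pi.sub_apply, min_eq_left hk]
    linarith [hsk.2 i, hxi i, hxi k, min_le_left (a + x i) (b + y i)]

lemma tropConvex_add_sector (U : Set (Fin n → ℝ)) (j : Fin (n + 1)) :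
    TropConvex (U + sector j) := by
  cases j using Fin.cases with
  | zero => exact tropConvex_add_sector_zero U
  | succ k => exact tropConvex_add_sector_succ U k

lemma TropConvex.fold_min_mem {ι : Type*} {V : Set (Fin n → ℝ)} (hV : TropConvex V)
    {x₀ : Fin n → ℝ} (hx₀ : x₀ ∈ V) {u : ι → Fin n → ℝ} {c : ι → ℝ} (s : Finset ι)
    (hu : ∀ k ∈ s, u k ∈ V) (hc : ∀ k ∈ s, 0 ≤ c k) :
    (fun i => s.fold min (x₀ i) (fun k => c k + u k i)) ∈ V := by
  classical
  induction s using Finset.induction_on with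
  | empty => simpa only [Finset.fold_empty] using hx₀
  | insert a s ha ih =>
    have hs := ih (fun k hk => hu k (Finset.mem_insert_of_mem hk))
      (fun k hk => hc k (Finset.mem_insert_of_mem hk))
    have hcomb := hV _ (hu a (Finset.mem_insert_self a s)) _ hs (c a) 0
      (min_eq_right (hc a (Finset.mem_insert_self a s)))
    simpa only [Finset.fold_insert ha, zero_add] using hcomb

lemma iInter_add_sector_subset {U V : Set (Fin n → ℝ)} (hV : TropConvex V) (hUV : U ⊆ V) :
    ⋂ j : Fin (n + 1), (U + sector j) ⊆ V := by
  intro x hx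
  rw [mem_iInter] at hx
  obtain ⟨u₀, hu₀, s₀, hs₀, hus₀⟩ := hx 0
  choose v hv t ht hvt using fun k : Fin n => hx k.succ
  have ht' := fun k => mem_sector_succ.1 (ht k)
  suffices hx : x = fun i => Finset.univ.fold min (u₀ i) (fun k => t k k + v k i) by
    rw [hx]
    exact hV.fold_min_mem (hUV hu₀) _ (fun k _ => hUV (hv k)) (fun k _ => (ht' k).1)
  funext i
  have hus₀_apply : ∀ j, u₀ j + s₀ j = x j := fun j => congrFun hus₀ j
  have hvt_apply : ∀ k j, v k j + t k j = x j := fun k j => congrFun (hvt k) j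
  refine le_antisymm ((Finset.le_fold_min _).2 ⟨?_, fun k _ => ?_⟩)
    ((Finset.fold_min_le _).2 (Or.inr ⟨i, Finset.mem_univ i, ?_⟩))
  · linarith [mem_sector_zero.1 hs₀ i, hus₀_apply i]
  · linarith [hvt_apply k i, hvt_apply k k, (ht' k).2 i]
  · linarith [hvt_apply i i]

end

theorem tconv_eq_iInter_minkowski (n : ℕ) (U : Set (Fin n → ℝ)) :
    tconv U = ⋂ j : Fin (n + 1), (U + sector j) :=
  Subset.antisymm
    (subset_iInter fun j => sInter_subset_of_mem ⟨tropConvex_add_sector U j, subset_add_sector U j⟩)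
    (subset_sInter fun _ hV => iInter_add_sector_subset hV.1 hV.2)
end

section
/- If P ⊆ ℝ^n is convex (in the ordinary sense), then its tropical convex hull tconv(P) is convex. -/
/-!
The maps `x ↦ l • x + m • p` with `l ≥ 0` commute with tropical combinations (the coefficients
get multiplied by `l`, which preserves `min a b = 0`). Hence, for a tropically convex `V`, the
points whose segments to all of a set `S` stay in `V` form a tropically convex set. Applying the
minimality of `tconv P` twice, first with `S = P` and then with `S = tconv P`, shows that every
segment between points of `tconv P` lies in `tconv P`.
-/

section

variable {n : ℕ}

lemma subset_tconv (U : Set (Fin n → ℝ)) : U ⊆ tconv U :=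
  Set.subset_sInter fun _ hV => hV.2

lemma tconv_subset {U V : Set (Fin n → ℝ)} (hV : TropConvex V) (hUV : U ⊆ V) : tconv U ⊆ V :=
  Set.sInter_subset_of_mem ⟨hV, hUV⟩

lemma tropConvex_tconv (U : Set (Fin n → ℝ)) : TropConvex (tconv U) := by
  intro x hx y hy a b hab V hV
  exact hV.1 x (hx V hV) y (hy V hV) a b hab

lemma smul_tropComb_add_smul {l : ℝ} (hl : 0 ≤ l) (m a b : ℝ) (x y p : Fin n → ℝ) :
    l • (fun i => min (a + x i) (b + y i)) + m • p =
      fun i => min (l * a + (l • x + m • p) i) (l * b + (l • y + m • p) i) := by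
  funext i
  simp only [Pi.add_apply, Pi.smul_apply, smul_eq_mul]
  rw [mul_min_of_nonneg _ _ hl, ← min_add_add_right]
  congr 1 <;> ring

lemma TropConvex.setOf_forall_segment_subset {V : Set (Fin n → ℝ)} (hV : TropConvex V)
    (S : Set (Fin n → ℝ)) : TropConvex {x | ∀ p ∈ S, segment ℝ x p ⊆ V} := by
  intro x hx y hy a b hab p hp z ⟨l, m, hl, hm, hlm, hz⟩
  rw [← hz, smul_tropComb_add_smul hl]
  refine hV _ (hx p hp ⟨l, m, hl, hm, hlm, rfl⟩) _ (hy p hp ⟨l, m, hl, hm, hlm, rfl⟩) _ _ ?_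
  rw [← mul_min_of_nonneg _ _ hl, hab, mul_zero]

end

theorem convex_tconv_of_convex (n : ℕ) (P : Set (Fin n → ℝ)) (hP : Convex ℝ P) :
    Convex ℝ (tconv P) := by
  have hT := tropConvex_tconv P
  have segment_to_P : ∀ x ∈ tconv P, ∀ p ∈ P, segment ℝ x p ⊆ tconv P :=
    tconv_subset (hT.setOf_forall_segment_subset P) fun x hx _ hp =>
      (hP.segment_subset hx hp).trans (subset_tconv P)
  have segment_to_tconv : ∀ x ∈ tconv P, ∀ y ∈ tconv P, segment ℝ x y ⊆ tconv P :=
    tconv_subset (hT.setOf_forall_segment_subset (tconv P)) fun p hp y hy =>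
      segment_symm ℝ p y ▸ segment_to_P y hy p hp
  exact convex_iff_segment_subset.2 segment_to_tconv
end

section
/- Let F = C_1 ∪ … ∪ C_N ⊆ ℝ^n, where each C_i = pos(G_i) is the set of all finite nonnegative linear combinations of a finite set G_i ⊆ ℝ^n (so F is a finite union of finitely generated convex cones). If F is tropically convex, then the maximum over i of the finrank over ℝ of the linear span of G_i equals the maximum over x ∈ F of the cardinality of the set {c ∈ ℝ : c ≠ 0 and x_k = c for some k} of distinct nonzero coordinates of x. -/
/-- The set of all finite nonnegative real linear combinations of elements of `S`. -/
def posHull {n : ℕ} (S : Set (Fin n → ℝ)) : Set (Fin n → ℝ) :=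
  {x | ∃ (k : ℕ) (c : Fin k → ℝ) (v : Fin k → Fin n → ℝ),
    (∀ i, 0 ≤ c i) ∧ (∀ i, v i ∈ S) ∧ x = ∑ i, c i • v i}

/-!
Both inequalities rest on one covering fact: if countably many sets cover the open positive
orthant of `ℝ^ι`, one of them has full affine span, since the others are Lebesgue-null. Hence a
linear map sending the orthant into `⋃ k, C k` has its range inside a single `span (C k)`.

`≤`: a point of `pos G` with at most `e` distinct nonzero coordinates lies in the range of one
of the finitely many slot maps `ℝ^e → ℝ^n`, which place the value `c j` in the coordinates of
slot `j`. So `span G` lies in one of these ranges.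

`≥`: let `x ∈ F` have nonzero values `c`. For a small `δ > 0`, every nonnegative combination of
`x` and the hinges `min(x, c - δ)` (`c > 0`), `min(x - c - δ, 0)` (`c < 0`) is obtained from `x`
by tropical operations, so it lies in `F`. Hence all of them lie in the span of one `G i`, and
so do the ramps `x - min(x, c - δ)` and `min(x - c - δ, 0)`. These are linearly independent: at a
coordinate where `x = c`, the ramp of `c` equals `±δ`, while the ramp of every other value of
at least the same absolute value vanishes.
-/

open Module Submodule

lemma posHull_subset_span {n : ℕ} (S : Set (Fin n → ℝ)) : posHull S ⊆ span ℝ S := by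
  rintro x ⟨k, c, v, -, hv, rfl⟩
  exact sum_mem fun i _ => smul_mem _ _ (subset_span (hv i))

lemma smul_mem_posHull {n : ℕ} {S : Set (Fin n → ℝ)} {x : Fin n → ℝ} {t : ℝ}
    (ht : 0 ≤ t) (hx : x ∈ posHull S) : t • x ∈ posHull S := by
  obtain ⟨k, c, v, hc, hv, rfl⟩ := hx
  refine ⟨k, fun i => t * c i, v, fun i => mul_nonneg ht (hc i), hv, ?_⟩
  simp only [Finset.smul_sum, smul_smul]

lemma smul_mem_iUnion_posHull {n : ℕ} {κ : Type*} (G : κ → Set (Fin n → ℝ)) (t : ℝ)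
    (ht : 0 ≤ t) (y : Fin n → ℝ) (hy : y ∈ ⋃ i, posHull (G i)) :
    t • y ∈ ⋃ i, posHull (G i) := by
  obtain ⟨i, hi⟩ := Set.mem_iUnion.1 hy
  exact Set.mem_iUnion.2 ⟨i, smul_mem_posHull ht hi⟩

lemma linearCombination_mem_posHull {n k : ℕ} {S : Set (Fin n → ℝ)} {v : Fin k → Fin n → ℝ}
    (hv : ∀ j, v j ∈ S) {s : Fin k → ℝ} (hs : ∀ j, 0 ≤ s j) :
    Fintype.linearCombination ℝ v s ∈ posHull S :=
  ⟨k, s, v, hs, hv, Fintype.linearCombination_apply _ _ _⟩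

def nonzeroValues {ι : Type*} (x : ι → ℝ) : Set ℝ := {c | c ≠ 0 ∧ ∃ k, x k = c}

lemma finite_nonzeroValues {ι : Type*} [Finite ι] (x : ι → ℝ) : (nonzeroValues x).Finite :=
  (Set.finite_range x).subset fun _ ⟨_, hk⟩ => hk

lemma ncard_nonzeroValues_le {n : ℕ} (x : Fin n → ℝ) : (nonzeroValues x).ncard ≤ n :=
  calc (nonzeroValues x).ncard ≤ (Set.range x).ncard :=
        Set.ncard_le_ncard (fun _ ⟨_, hk⟩ => hk) (Set.finite_range x)
    _ ≤ (Set.univ : Set (Fin n)).ncard := by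
        rw [← Set.image_univ]; exact Set.ncard_image_le Set.finite_univ
    _ = n := by simp

open MeasureTheory in
lemma exists_affineSpan_eq_top_of_subset_iUnion {E κ : Type*} [NormedAddCommGroup E]
    [NormedSpace ℝ E] [FiniteDimensional ℝ E] [MeasurableSpace E] [BorelSpace E] [Countable κ]
    {O : Set E} (hO : IsOpen O) (hO' : O.Nonempty) {A : κ → Set E} (hOA : O ⊆ ⋃ k, A k) :
    ∃ k, affineSpan ℝ (A k) = ⊤ := by
  by_contra! h
  have hnull (k : κ) : Measure.addHaar (A k) = 0 :=
    measure_mono_null (subset_affineSpan ℝ _) (Measure.addHaar_affineSubspace _ _ (h k))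
  exact (hO.measure_pos Measure.addHaar hO').ne'
    (measure_mono_null hOA (measure_iUnion_null hnull))

lemma exists_range_le_span_of_forall_pos {ι κ E : Type*} [Fintype ι] [Countable κ]
    [AddCommGroup E] [Module ℝ E] (Φ : (ι → ℝ) →ₗ[ℝ] E) (C : κ → Set E)
    (hΦ : ∀ s, (∀ j, 0 < s j) → ∃ k, Φ s ∈ C k) :
    ∃ k, LinearMap.range Φ ≤ span ℝ (C k) := by
  have hO : IsOpen (Set.univ.pi fun _ : ι => Set.Ioi (0 : ℝ)) :=
    isOpen_set_pi Set.finite_univ fun _ _ => isOpen_Ioi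
  obtain ⟨k, hk⟩ := exists_affineSpan_eq_top_of_subset_iUnion hO ⟨1, by simp⟩
    (A := fun k => Φ ⁻¹' C k) fun s hs => by simpa using hΦ s (by simpa using hs)
  refine ⟨k, LinearMap.range_le_iff_comap.2 (eq_top_iff.2 ?_)⟩
  have htop := congrArg AffineSubspace.direction hk
  rw [direction_affineSpan, AffineSubspace.direction_top, vectorSpan_def] at htop
  rw [← htop, span_le]
  rintro _ ⟨a, ha, b, hb, rfl⟩
  change Φ (a - b) ∈ span ℝ (C k)
  rw [map_sub]
  exact sub_mem (subset_span ha) (subset_span hb)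

def slotMap {ι κ : Type*} (σ : ι → Option κ) : (κ → ℝ) →ₗ[ℝ] (ι → ℝ) :=
  LinearMap.pi fun k => (σ k).elim 0 LinearMap.proj

lemma exists_mem_range_slotMap {ι κ : Type*} (y : ι → ℝ) (e : nonzeroValues y ↪ κ) :
    ∃ σ : ι → Option κ, y ∈ LinearMap.range (slotMap σ) := by
  classical
  refine ⟨fun k => if hk : y k = 0 then none else some (e ⟨y k, hk, k, rfl⟩),
    Function.extend e Subtype.val 0, funext fun k => ?_⟩
  by_cases hk : y k = 0 <;> simp [slotMap, hk, e.injective.extend_apply]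

lemma finrank_span_le_of_forall_ncard_le {n e : ℕ} (G : Set (Fin n → ℝ))
    (hG : ∀ y ∈ posHull G, (nonzeroValues y).ncard ≤ e) : finrank ℝ (span ℝ G) ≤ e := by
  obtain ⟨b, hbG, hspan, hli⟩ := exists_linearIndependent ℝ G
  obtain ⟨m, v, -, rfl⟩ := hli.setFinite.fin_param
  obtain ⟨σ, hσ⟩ := exists_range_le_span_of_forall_pos (Fintype.linearCombination ℝ v)
    (fun σ : Fin n → Option (Fin e) => (LinearMap.range (slotMap σ) : Set (Fin n → ℝ)))
    fun s hs => by
      have hy := linearCombination_mem_posHull (fun j => hbG ⟨j, rfl⟩) fun j => (hs j).le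
      have := (finite_nonzeroValues (Fintype.linearCombination ℝ v s)).to_subtype
      exact exists_mem_range_slotMap _ ((Finite.equivFin _).toEmbedding.trans
        (Fin.castLEEmb (by simpa [Nat.card_coe_set_eq] using hG _ hy)))
  calc finrank ℝ (span ℝ G) ≤ finrank ℝ (LinearMap.range (slotMap σ)) := finrank_mono <| by
        rw [← hspan, ← Fintype.range_linearCombination]
        simpa using hσ
    _ ≤ e := (LinearMap.finrank_range_le _).trans (by simp)

inductive TropComb : (ℝ → ℝ) → Prop
  | ray {l : ℝ} (hl : 0 ≤ l) : TropComb fun t => l * t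
  | inf {f g : ℝ → ℝ} {a b : ℝ} (hf : TropComb f) (hg : TropComb g) (hab : min a b = 0) :
      TropComb fun t => min (a + f t) (b + g t)

namespace TropComb

lemma comp_mem {n : ℕ} {F : Set (Fin n → ℝ)} (htc : TropConvex F)
    (hsmul : ∀ t : ℝ, 0 ≤ t → ∀ y ∈ F, t • y ∈ F) {x : Fin n → ℝ} (hx : x ∈ F)
    {f : ℝ → ℝ} (hf : TropComb f) : f ∘ x ∈ F := by
  induction hf with
  | ray hl => exact hsmul _ hl x hx
  | inf _ _ hab hf hg => exact htc _ hf _ hg _ _ hab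

lemma ray_add {l : ℝ} (hl : 0 ≤ l) {g : ℝ → ℝ} (hg : TropComb g) :
    TropComb fun t => l * t + g t := by
  induction hg with
  | @ray l' hl' => simpa only [← add_mul] using ray (add_nonneg hl hl')
  | inf _ _ hab hf hg =>
    convert inf hf hg hab using 2 with t
    rw [add_min]; ring_nf

lemma add {f g : ℝ → ℝ} (hf : TropComb f) (hg : TropComb g) : TropComb (f + g) := by
  induction hf with
  | ray hl => exact ray_add hl hg
  | inf _ _ hab hf hf' =>
    convert inf hf hf' hab using 2 with t
    simp only [Pi.add_apply, ← add_assoc, min_add_add_right]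

lemma smul {f : ℝ → ℝ} (hf : TropComb f) {s : ℝ} (hs : 0 ≤ s) : TropComb (s • f) := by
  induction hf with
  | @ray l hl =>
    convert ray (mul_nonneg hs hl) using 1
    ext t
    simp [mul_assoc]
  | inf _ _ hab hf hg =>
    convert inf hf hg (by rw [← mul_min_of_nonneg _ _ hs, hab, mul_zero]) using 2 with t
    simp only [Pi.smul_apply, smul_eq_mul, mul_min_of_nonneg _ _ hs, mul_add]

lemma sum {ι : Type*} (s : Finset ι) {f : ι → ℝ → ℝ} (hf : ∀ j ∈ s, TropComb (f j)) :
    TropComb (∑ j ∈ s, f j) :=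
  Finset.sum_induction f TropComb (fun _ _ => add) (by simpa [Pi.zero_def] using ray le_rfl) hf

lemma linearCombination_comp_mem {ι : Type*} [Fintype ι] {n : ℕ} {F : Set (Fin n → ℝ)}
    (htc : TropConvex F) (hsmul : ∀ t : ℝ, 0 ≤ t → ∀ y ∈ F, t • y ∈ F)
    {x : Fin n → ℝ} (hx : x ∈ F) {h : ι → ℝ → ℝ} (hh : ∀ j, TropComb (h j))
    {s : ι → ℝ} (hs : ∀ j, 0 ≤ s j) :
    Fintype.linearCombination ℝ (fun j => h j ∘ x) s ∈ F := by
  convert (sum Finset.univ fun j _ => (hh j).smul (hs j)).comp_mem htc hsmul hx using 1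
  ext k
  simp [Fintype.linearCombination_apply, Finset.sum_apply]

lemma min_const {c : ℝ} (hc : 0 ≤ c) : TropComb fun t => min t c := by
  simpa using inf (a := 0) (b := c) (ray zero_le_one) (ray le_rfl) (min_eq_left hc)

lemma min_sub_const_zero {c : ℝ} (hc : c ≤ 0) : TropComb fun t => min (t - c) 0 := by
  convert inf (a := -c) (b := 0) (ray zero_le_one) (ray le_rfl) (min_eq_right (by linarith))
    using 2 with t
  simp only [zero_mul, add_zero, one_mul]
  ring_nf

end TropComb

noncomputable def hinge (δ c t : ℝ) : ℝ := if 0 < c then min t (c - δ) else min (t - (c + δ)) 0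

noncomputable def ramp (δ c t : ℝ) : ℝ := if 0 < c then t - hinge δ c t else hinge δ c t

lemma TropComb.hinge {δ c : ℝ} (hc : c ≠ 0) (hδ : δ ≤ |c|) : TropComb (hinge δ c) := by
  unfold _root_.hinge
  split_ifs with hpos
  · exact min_const (by rw [abs_of_pos hpos] at hδ; linarith)
  · have hneg : c < 0 := lt_of_le_of_ne (not_lt.1 hpos) hc
    exact min_sub_const_zero (by rw [abs_of_neg hneg] at hδ; linarith)

lemma ramp_self_ne_zero {δ c : ℝ} (hδ : 0 < δ) (hc : δ < |c|) : ramp δ c c ≠ 0 := by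
  unfold ramp hinge
  split_ifs with hpos
  · rw [min_eq_right (by linarith)]; linarith
  · have hneg : c < 0 := lt_of_le_of_ne (not_lt.1 hpos) (by rintro rfl; simp at hc; linarith)
    rw [min_eq_left (by linarith)]; linarith

lemma ramp_eq_zero {δ c t : ℝ} (habs : |t| ≤ |c|) (hgap : δ < |t - c|) : ramp δ c t = 0 := by
  unfold ramp hinge
  split_ifs with hpos
  · rw [abs_of_pos hpos] at habs
    have := le_abs_self t
    rw [abs_of_nonpos (by linarith)] at hgap
    rw [min_eq_left (by linarith), sub_self]
  · rw [abs_of_nonpos (not_lt.1 hpos)] at habs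
    have := neg_abs_le t
    rw [abs_of_nonneg (by linarith)] at hgap
    exact min_eq_right (by linarith)

lemma exists_pos_lt_abs_sub {s : Set ℝ} (hs : s.Finite) :
    ∃ δ > 0, ∀ a ∈ s, ∀ b ∈ s, a ≠ b → δ < |a - b| := by
  have hev : ∀ᶠ δ in nhdsWithin (0 : ℝ) (Set.Ioi 0),
      ∀ p ∈ s ×ˢ s, p.1 ≠ p.2 → δ < |p.1 - p.2| := by
    refine (Filter.eventually_all_finite (hs.prod hs)).2 fun p _ => ?_
    by_cases hp : p.1 = p.2
    · exact Filter.Eventually.of_forall fun _ h => (h hp).elim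
    · exact ((eventually_lt_nhds (abs_pos.2 (sub_ne_zero.2 hp))).filter_mono
        nhdsWithin_le_nhds).mono fun _ h _ => h
  obtain ⟨δ, hδ, hpos⟩ := (hev.and self_mem_nhdsWithin).exists
  exact ⟨δ, hpos, fun a ha b hb hab => hδ (a, b) ⟨ha, hb⟩ hab⟩

lemma exists_forall_ramp_comp_mem_span {n : ℕ} {κ ι : Type*} [Countable κ] [Fintype ι]
    (G : κ → Set (Fin n → ℝ)) (htc : TropConvex (⋃ i, posHull (G i)))
    {x : Fin n → ℝ} (hx : x ∈ ⋃ i, posHull (G i)) {δ : ℝ} {c : ι → ℝ}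
    (hc : ∀ j, c j ≠ 0) (hδ : ∀ j, δ ≤ |c j|) :
    ∃ i, ∀ j, ramp δ (c j) ∘ x ∈ span ℝ (G i) := by
  let h : Option ι → ℝ → ℝ := fun j => j.elim id fun j => hinge δ (c j)
  have hh (j : Option ι) : TropComb (h j) := by
    cases j with
    | none => exact (by simpa using TropComb.ray zero_le_one : TropComb fun t => t)
    | some j => exact .hinge (hc j) (hδ j)
  let Y : Option ι → Fin n → ℝ := fun j => h j ∘ x
  obtain ⟨i, hi⟩ := exists_range_le_span_of_forall_pos (Fintype.linearCombination ℝ Y)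
    (fun i => posHull (G i)) fun s hs => Set.mem_iUnion.1 <|
      TropComb.linearCombination_comp_mem htc (smul_mem_iUnion_posHull G) hx hh fun j => (hs j).le
  rw [Fintype.range_linearCombination] at hi
  refine ⟨i, fun j => span_le.2 (posHull_subset_span _) (hi ?_)⟩
  by_cases hpos : 0 < c j
  · have hY : ramp δ (c j) ∘ x = Y none - Y (some j) := by ext k; simp [Y, h, ramp, hpos]
    rw [hY]
    exact sub_mem (subset_span ⟨none, rfl⟩) (subset_span ⟨some j, rfl⟩)
  · have hY : ramp δ (c j) ∘ x = Y (some j) := by ext k; simp [Y, h, ramp, hpos]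
    exact hY ▸ subset_span ⟨some j, rfl⟩

lemma linearIndependent_of_triangular {K M ι α : Type*} [Ring K] [NoZeroDivisors K]
    [AddCommGroup M] [Module K M] [LinearOrder α] (w : ι → α) (u : ι → M)
    (hu : ∀ i, ∃ φ : M →ₗ[K] K, φ (u i) ≠ 0 ∧ ∀ j ≠ i, w i ≤ w j → φ (u j) = 0) :
    LinearIndependent K u := by
  classical
  rw [linearIndependent_iff']
  intro s g hsum
  by_contra! hg
  obtain ⟨i, hi, hmin⟩ := Finset.exists_min_image (s.filter (g · ≠ 0)) w
    (by simpa [Finset.Nonempty] using hg)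
  obtain ⟨φ, hφi, hφ⟩ := hu i
  have : g i * φ (u i) = 0 := by
    rw [← map_zero φ, ← hsum, map_sum, Finset.sum_eq_single_of_mem i (Finset.mem_filter.1 hi).1]
    · simp
    intro j hj hji
    by_cases hgj : g j = 0
    · simp [hgj]
    · simp [hφ j hji (hmin j (Finset.mem_filter.2 ⟨hj, hgj⟩))]
  exact mul_ne_zero (Finset.mem_filter.1 hi).2 hφi this

lemma linearIndependent_ramp_comp {ι : Type*} (x : ι → ℝ) {δ : ℝ} (hδ : 0 < δ)
    (hgap : ∀ a ∈ insert 0 (nonzeroValues x), ∀ b ∈ insert 0 (nonzeroValues x),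
      a ≠ b → δ < |a - b|) :
    LinearIndependent ℝ fun c : nonzeroValues x => ramp δ c ∘ x := by
  refine linearIndependent_of_triangular (fun c : nonzeroValues x => |(c : ℝ)|) _ fun c => ?_
  obtain ⟨k, hk⟩ := c.2.2
  refine ⟨LinearMap.proj k, ?_, fun c' hne hle => ?_⟩
  · simpa [hk] using ramp_self_ne_zero hδ (by simpa using hgap c (by simp) 0 (by simp) c.2.1)
  · simpa [hk] using ramp_eq_zero hle
      (hgap c (by simp) c' (by simp) fun h => hne (Subtype.ext h.symm))

lemma exists_ncard_nonzeroValues_le_finrank {n : ℕ} {κ : Type*} [Countable κ]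
    (G : κ → Set (Fin n → ℝ)) (htc : TropConvex (⋃ i, posHull (G i)))
    {x : Fin n → ℝ} (hx : x ∈ ⋃ i, posHull (G i)) :
    ∃ i, (nonzeroValues x).ncard ≤ finrank ℝ (span ℝ (G i)) := by
  have hV := finite_nonzeroValues x
  have : Fintype (nonzeroValues x) := hV.fintype
  obtain ⟨δ, hδ, hgap⟩ := exists_pos_lt_abs_sub (hV.insert 0)
  obtain ⟨i, hi⟩ := exists_forall_ramp_comp_mem_span G htc hx
    (c := ((↑) : nonzeroValues x → ℝ)) (fun c => c.2.1)
    fun c => (by simpa using hgap c (by simp) 0 (by simp) c.2.1 : δ < |(c : ℝ)|).le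
  refine ⟨i, ?_⟩
  calc (nonzeroValues x).ncard = Fintype.card (nonzeroValues x) :=
        (Nat.card_coe_set_eq _).symm.trans Nat.card_eq_fintype_card
    _ = finrank ℝ (span ℝ (Set.range fun c : nonzeroValues x => ramp δ c ∘ x)) :=
        (finrank_span_eq_card (linearIndependent_ramp_comp x hδ hgap)).symm
    _ ≤ finrank ℝ (span ℝ (G i)) := finrank_mono (span_le.2 (Set.range_subset_iff.2 hi))

theorem dim_tropically_convex_fan_general (n N : ℕ)
    (G : Fin N → Set (Fin n → ℝ))
    (F : Set (Fin n → ℝ)) (hF : F = ⋃ i, posHull (G i))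
    (htc : TropConvex F) :
    (Finset.univ.sup fun i : Fin N => Module.finrank ℝ (Submodule.span ℝ (G i))) =
      sSup {d : ℕ | ∃ x ∈ F, d = {c : ℝ | c ≠ 0 ∧ ∃ k, x k = c}.ncard} := by
  subst hF
  have hbdd : BddAbove {d : ℕ | ∃ x ∈ ⋃ i, posHull (G i), d = (nonzeroValues x).ncard} :=
    ⟨n, by rintro _ ⟨x, -, rfl⟩; exact ncard_nonzeroValues_le x⟩
  apply le_antisymm
  · refine Finset.sup_le fun i _ => finrank_span_le_of_forall_ncard_le (G i) fun y hy => ?_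
    exact le_csSup hbdd ⟨y, Set.mem_iUnion.2 ⟨i, hy⟩, rfl⟩
  · refine csSup_le' ?_
    rintro _ ⟨x, hx, rfl⟩
    obtain ⟨i, hi⟩ := exists_ncard_nonzeroValues_le_finrank G htc hx
    exact hi.trans (Finset.le_sup (f := fun i => finrank ℝ (span ℝ (G i))) (Finset.mem_univ i))

theorem dim_tropically_convex_fan (n N : ℕ) (hN : 1 ≤ N)
    (G : Fin N → Set (Fin n → ℝ)) (hGfin : ∀ i, (G i).Finite)
    (F : Set (Fin n → ℝ)) (hF : F = ⋃ i, posHull (G i))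
    (htc : TropConvex F) :
    (Finset.univ.sup fun i : Fin N => Module.finrank ℝ (Submodule.span ℝ (G i))) =
      sSup {d : ℕ | ∃ x ∈ F, d = {c : ℝ | c ≠ 0 ∧ ∃ k, x k = c}.ncard} :=
  dim_tropically_convex_fan_general n N G F hF htc
end

section
/- Let a ∈ ℝ^n with a ≠ 0 and let H = {x ∈ ℝ^n : Σ_{k=1}^n a_k x_k ≥ 0} be the corresponding closed linear halfspace. Then either tconv(H) = H or tconv(H) = ℝ^n. -/
section TropicalHull

variable {n : ℕ} {U : Set (Fin n → ℝ)}

theorem TropConvex.tconv_eq (hU : TropConvex U) : tconv U = U :=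
  subset_antisymm (Set.sInter_subset_of_mem ⟨hU, subset_rfl⟩)
    fun _ hx => Set.mem_sInter.mpr fun _ hV => hV.2 hx

theorem mem_tconv_of_eq_min {x y z : Fin n → ℝ} (hx : x ∈ U) (hy : y ∈ U) {α β : ℝ}
    (hαβ : min α β = 0) (hz : z = fun i => min (α + x i) (β + y i)) : z ∈ tconv U :=
  Set.mem_sInter.mpr fun _ hV => hz ▸ hV.1 x (hV.2 hx) y (hV.2 hy) α β hαβ

theorem tropConvex_of_min_add_mem
    (h : ∀ x ∈ U, ∀ y ∈ U, ∀ β : ℝ, 0 ≤ β → (fun i => min (x i) (β + y i)) ∈ U) :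
    TropConvex U := by
  intro x hx y hy α β hαβ
  rcases min_eq_iff.mp hαβ with ⟨rfl, hβ⟩ | ⟨rfl, hα⟩
  · simpa only [zero_add] using h x hx y hy β hβ
  · simpa only [zero_add, min_comm] using h y hy x hx α hα

end TropicalHull

theorem dotProduct_le_dotProduct_of_nonpos_off {ι : Type*} [Fintype ι] {a w z : ι → ℝ}
    (s : Set ι) (ha : ∀ k ∉ s, a k ≤ 0) (hle : z ≤ w) (heq : ∀ k ∈ s, z k = w k) :
    a ⬝ᵥ w ≤ a ⬝ᵥ z := by
  refine Finset.sum_le_sum fun k _ => ?_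
  by_cases hk : k ∈ s
  · rw [heq k hk]
  · exact mul_le_mul_of_nonpos_left (hle k) (ha k hk)

section Halfspace

variable {n : ℕ} {a : Fin n → ℝ}

theorem tropConvex_halfspace (ha : ∀ j, 0 < a j → (∀ k ≠ j, a k ≤ 0) ∧ 0 ≤ ∑ k, a k) :
    TropConvex {x | 0 ≤ a ⬝ᵥ x} := by
  refine tropConvex_of_min_add_mem fun x (hx : 0 ≤ a ⬝ᵥ x) y (hy : 0 ≤ a ⬝ᵥ y) β hβ => ?_
  show 0 ≤ a ⬝ᵥ fun i => min (x i) (β + y i)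
  by_cases hnonpos : ∀ k, a k ≤ 0
  · exact hx.trans (dotProduct_le_dotProduct_of_nonpos_off ∅ (fun k _ => hnonpos k)
      (fun i => min_le_left _ _) (by simp))
  push Not at hnonpos
  obtain ⟨j, hj⟩ := hnonpos
  obtain ⟨hneg, hsum⟩ := ha j hj
  rcases le_total (x j) (β + y j) with hxj | hyj
  · exact hx.trans (dotProduct_le_dotProduct_of_nonpos_off {j} hneg
      (fun i => min_le_left _ _) (by simpa using hxj))
  · have hshift : a ⬝ᵥ (β • 1 + y) = β * ∑ k, a k + a ⬝ᵥ y := by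
      rw [dotProduct_add, dotProduct_smul, dotProduct_one, smul_eq_mul]
    refine le_trans ?_ (dotProduct_le_dotProduct_of_nonpos_off (w := β • 1 + y) {j} hneg
      (fun i => by simp) (by simpa using hyj))
    rw [hshift]
    positivity

theorem exists_nonneg_add_single_mem_halfspace {j : Fin n} (hj : 0 < a j) (z : Fin n → ℝ) :
    ∃ t, 0 ≤ t ∧ 0 ≤ a ⬝ᵥ (z + Pi.single j t) := by
  refine ⟨|a ⬝ᵥ z| / a j, by positivity, ?_⟩
  rw [dotProduct_add, dotProduct_single, mul_div_cancel₀ _ hj.ne']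
  linarith [neg_abs_le (a ⬝ᵥ z)]

theorem exists_nonneg_sub_mem_halfspace (hsum : ∑ k, a k < 0) (z : Fin n → ℝ) :
    ∃ b : ℝ, 0 ≤ b ∧ 0 ≤ a ⬝ᵥ (z - b • 1) := by
  refine ⟨|a ⬝ᵥ z| / -∑ k, a k, div_nonneg (abs_nonneg _) (by linarith), ?_⟩
  rw [dotProduct_sub, dotProduct_smul, dotProduct_one, smul_eq_mul, div_mul_eq_mul_div,
    div_neg, mul_div_assoc, div_self hsum.ne, mul_one, sub_neg_eq_add]
  linarith [neg_abs_le (a ⬝ᵥ z)]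

theorem tconv_halfspace_eq_univ_of_two_pos {j l : Fin n} (hlj : l ≠ j) (hj : 0 < a j)
    (hl : 0 < a l) : tconv {x | 0 ≤ a ⬝ᵥ x} = Set.univ := by
  refine Set.eq_univ_of_forall fun z => ?_
  obtain ⟨t, ht, hxt⟩ := exists_nonneg_add_single_mem_halfspace hj z
  obtain ⟨s, hs, hys⟩ := exists_nonneg_add_single_mem_halfspace hl z
  refine mem_tconv_of_eq_min hxt hys (min_self 0) (funext fun i => ?_)
  rcases eq_or_ne i j with rfl | hij
  · simp [hlj.symm, ht]
  · rcases eq_or_ne i l with rfl | hil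
    · simp [hij, hs]
    · simp [hij, hil]

theorem tconv_halfspace_eq_univ_of_sum_neg {j : Fin n} (hj : 0 < a j) (hsum : ∑ k, a k < 0) :
    tconv {x | 0 ≤ a ⬝ᵥ x} = Set.univ := by
  refine Set.eq_univ_of_forall fun z => ?_
  obtain ⟨t, ht, hxt⟩ := exists_nonneg_add_single_mem_halfspace hj z
  obtain ⟨b, hb, hyb⟩ := exists_nonneg_sub_mem_halfspace hsum z
  refine mem_tconv_of_eq_min hxt hyb (min_eq_left hb) (funext fun i => ?_)
  rcases eq_or_ne i j with rfl | hij
  · simp [ht]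
  · simp [hij]

end Halfspace

theorem tconv_halfspace_general (n : ℕ) (a : Fin n → ℝ)
    (H : Set (Fin n → ℝ)) (hH : H = {x | 0 ≤ ∑ k, a k * x k}) :
    tconv H = H ∨ tconv H = Set.univ := by
  replace hH : H = {x | 0 ≤ a ⬝ᵥ x} := hH
  subst hH
  by_cases hconv : ∀ j, 0 < a j → (∀ k ≠ j, a k ≤ 0) ∧ 0 ≤ ∑ k, a k
  · exact Or.inl (tropConvex_halfspace hconv).tconv_eq
  right
  push Not at hconv
  obtain ⟨j, hj, hsum⟩ := hconv
  by_cases htwo : ∃ l ≠ j, 0 < a l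
  · obtain ⟨l, hlj, hl⟩ := htwo
    exact tconv_halfspace_eq_univ_of_two_pos hlj hj hl
  · push Not at htwo
    exact tconv_halfspace_eq_univ_of_sum_neg hj (hsum htwo)

theorem tconv_halfspace (n : ℕ) (a : Fin n → ℝ) (ha : a ≠ 0)
    (H : Set (Fin n → ℝ)) (hH : H = {x | 0 ≤ ∑ k, a k * x k}) :
    tconv H = H ∨ tconv H = Set.univ :=
  tconv_halfspace_general n a H hH
end

section
/- Let a ∈ ℝ^n with a ≠ 0 and let H = {x ∈ ℝ^n : Σ_{k=1}^n a_k x_k ≥ 0}. Then the following are equivalent: (1) H is tropically convex; (2) there exists j ∈ {0, 1, …, n} with S_j ⊆ H; (3) either a_k ≤ 0 for all k ∈ {1, …, n}, or there exists j ∈ {1, …, n} such that a_k ≤ 0 for all k ≠ j and Σ_{k=1}^n a_k ≥ 0. -/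
/-!
A tropical combination `z = min (s + x) (t + y)` (where `s, t ≥ 0`) lies below one of the
translates `s + x`, `t + y` and agrees with it in any given coordinate `j`. Hence if `a` is
nonpositive off `j` and `∑ a ≥ 0`, then `a ⬝ᵥ z ≥ a ⬝ᵥ (s + x) = s ∑ a + a ⬝ᵥ x ≥ 0`; the same
estimate, with `x = 0` and `s = z j`, gives `S_{j+1} ⊆ H`. Conversely, two positive coordinates of
`a`, or one with `∑ a < 0`, yield points of `H` whose tropical combination leaves `H`, while the
points `-e_k` and `1` of the sectors read the sign conditions off `S_j ⊆ H`.
-/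

open Finset

section DotProduct

variable {ι : Type*} [Fintype ι] {a z w : ι → ℝ}

lemma dotProduct_le_dotProduct_of_nonpos_of_le (ha : ∀ k, a k ≤ 0) (hzw : z ≤ w) :
    a ⬝ᵥ w ≤ a ⬝ᵥ z :=
  sum_le_sum fun k _ => mul_le_mul_of_nonpos_left (hzw k) (ha k)

lemma dotProduct_le_dotProduct_of_le_of_eq {j : ι} (ha : ∀ k, k ≠ j → a k ≤ 0) (hzw : z ≤ w)
    (hj : z j = w j) : a ⬝ᵥ w ≤ a ⬝ᵥ z := by
  refine sum_le_sum fun k _ => ?_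
  rcases eq_or_ne k j with rfl | hk
  · rw [hj]
  · exact mul_le_mul_of_nonpos_left (hzw k) (ha k hk)

lemma dotProduct_const_add (s : ℝ) (x : ι → ℝ) :
    a ⬝ᵥ (fun k => s + x k) = s * ∑ k, a k + a ⬝ᵥ x := by
  rw [dotProduct, dotProduct, mul_sum, ← sum_add_distrib]
  exact sum_congr rfl fun k _ => by ring

end DotProduct

section Halfspace

variable {ι : Type*} [Fintype ι] {a : ι → ℝ}

def halfspace (a : ι → ℝ) : Set (ι → ℝ) :=
  {x | 0 ≤ a ⬝ᵥ x}

@[simp]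
lemma mem_halfspace {x : ι → ℝ} : x ∈ halfspace a ↔ 0 ≤ a ⬝ᵥ x :=
  Iff.rfl

lemma neg_single_mem_halfspace_iff [DecidableEq ι] {k : ι} :
    (-Pi.single k 1 : ι → ℝ) ∈ halfspace a ↔ a k ≤ 0 := by
  simp [dotProduct_neg]

lemma one_mem_halfspace_iff : 1 ∈ halfspace a ↔ 0 ≤ ∑ k, a k := by
  simp [dotProduct_one]

lemma mem_halfspace_of_le_const_add {j : ι} (ha : ∀ k, k ≠ j → a k ≤ 0)
    (hsum : 0 ≤ ∑ k, a k) {x z : ι → ℝ} (hx : x ∈ halfspace a) {s : ℝ} (hs : 0 ≤ s)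
    (hz : ∀ k, z k ≤ s + x k) (hzj : z j = s + x j) : z ∈ halfspace a :=
  calc 0 ≤ s * ∑ k, a k + a ⬝ᵥ x := add_nonneg (mul_nonneg hs hsum) hx
    _ = a ⬝ᵥ (fun k => s + x k) := (dotProduct_const_add s x).symm
    _ ≤ a ⬝ᵥ z := dotProduct_le_dotProduct_of_le_of_eq ha hz hzj

end Halfspace

lemma sector_zero {n : ℕ} : sector (0 : Fin (n + 1)) = {x | ∀ i, x i ≤ 0} := by
  simp [sector]

lemma sector_succ {n : ℕ} (j : Fin n) :
    sector j.succ = {x : Fin n → ℝ | 0 ≤ x j ∧ ∀ i, x i ≤ x j} := by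
  simp [sector]

lemma neg_single_mem_sector {n : ℕ} {j : Fin (n + 1)} {k : Fin n} (hjk : j ≠ k.succ) :
    (-Pi.single k 1 : Fin n → ℝ) ∈ sector j := by
  have hle : (-Pi.single k 1 : Fin n → ℝ) ≤ 0 := by simp
  cases j using Fin.cases with
  | zero => rw [sector_zero]; exact hle
  | succ j =>
    have hj : (-Pi.single k 1 : Fin n → ℝ) j = 0 := by
      simp [show j ≠ k by rintro rfl; exact hjk rfl]
    rw [sector_succ]
    exact ⟨hj.ge, fun i => hj ▸ hle i⟩

lemma one_mem_sector_succ {n : ℕ} (j : Fin n) : 1 ∈ sector j.succ := by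
  simp [sector_succ]

section TropicalHalfspace

variable {n : ℕ} {a : Fin n → ℝ}

lemma sector_zero_subset_halfspace (ha : ∀ k, a k ≤ 0) : sector 0 ⊆ halfspace a := by
  intro x hx
  rw [sector_zero] at hx
  simpa using dotProduct_le_dotProduct_of_nonpos_of_le ha (w := 0) hx

lemma sector_succ_subset_halfspace {j : Fin n} (ha : ∀ k, k ≠ j → a k ≤ 0)
    (hsum : 0 ≤ ∑ k, a k) : sector j.succ ⊆ halfspace a := by
  intro x hx
  rw [sector_succ] at hx
  exact mem_halfspace_of_le_const_add ha hsum (x := 0) (by simp) hx.1 (by simpa using hx.2)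
    (by simp)

lemma exists_sector_subset_halfspace_iff :
    (∃ j : Fin (n + 1), sector j ⊆ halfspace a) ↔
      (∀ k, a k ≤ 0) ∨ ∃ j : Fin n, (∀ k, k ≠ j → a k ≤ 0) ∧ 0 ≤ ∑ k, a k := by
  constructor
  · rintro ⟨j, hj⟩
    have hneg {k : Fin n} (hjk : j ≠ k.succ) : a k ≤ 0 :=
      neg_single_mem_halfspace_iff.1 (hj (neg_single_mem_sector hjk))
    cases j using Fin.cases with
    | zero => exact Or.inl fun k => hneg (Fin.succ_ne_zero k).symm
    | succ j =>
      exact Or.inr ⟨j, fun k hk => hneg (by simpa using hk.symm),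
        one_mem_halfspace_iff.1 (hj (one_mem_sector_succ j))⟩
  · rintro (ha | ⟨j, ha, hsum⟩)
    · exact ⟨0, sector_zero_subset_halfspace ha⟩
    · exact ⟨j.succ, sector_succ_subset_halfspace ha hsum⟩

lemma tropConvex_halfspace_of_nonpos (ha : ∀ k, a k ≤ 0) : TropConvex (halfspace a) := by
  intro x hx y hy s t hst
  rcases min_eq_iff.1 hst with ⟨rfl, -⟩ | ⟨rfl, -⟩
  · exact hx.trans (dotProduct_le_dotProduct_of_nonpos_of_le ha fun k => by simp)
  · exact hy.trans (dotProduct_le_dotProduct_of_nonpos_of_le ha fun k => by simp)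

lemma tropConvex_halfspace_of_sum_nonneg {j : Fin n} (ha : ∀ k, k ≠ j → a k ≤ 0)
    (hsum : 0 ≤ ∑ k, a k) : TropConvex (halfspace a) := by
  intro x hx y hy s t hst
  have hs : 0 ≤ s := hst ▸ min_le_left s t
  have ht : 0 ≤ t := hst ▸ min_le_right s t
  rcases le_total (s + x j) (t + y j) with h | h
  · exact mem_halfspace_of_le_const_add ha hsum hx hs (fun k => min_le_left _ _) (min_eq_left h)
  · exact mem_halfspace_of_le_const_add ha hsum hy ht (fun k => min_le_right _ _) (min_eq_right h)

lemma nonpos_of_tropConvex_halfspace (hH : TropConvex (halfspace a)) {p q : Fin n}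
    (hp : 0 < a p) (hqp : q ≠ p) : a q ≤ 0 := by
  by_contra! hq
  -- `x` and `-x` lie on the boundary hyperplane, but `a ⬝ᵥ min x (-x) = -2 * a p * a q < 0`.
  set x : Fin n → ℝ := Pi.single p (a q) - Pi.single q (a p)
  have hx : a ⬝ᵥ x = 0 := by simp [x, dotProduct_sub, mul_comm]
  have hmin : (fun i => min (0 + x i) (0 + (-x) i)) =
      -(Pi.single p (a q) + Pi.single q (a p)) := by
    ext i
    by_cases hip : i = p <;> by_cases hiq : i = q <;> simp [x, hip, hiq, hqp, hp.le, hq.le]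
  have := hH x (by simp [hx]) (-x) (by simp [dotProduct_neg, hx]) 0 0 (min_self 0)
  rw [hmin, mem_halfspace, dotProduct_neg, dotProduct_add, dotProduct_single,
    dotProduct_single] at this
  nlinarith

lemma sum_nonneg_of_tropConvex_halfspace (hH : TropConvex (halfspace a)) {p : Fin n}
    (hp : 0 < a p) : 0 ≤ ∑ k, a k := by
  by_contra! hsum
  -- `x ≥ 1` lies on the boundary hyperplane, and truncating it at level `1` gives `1 ∉ halfspace a`.
  set x : Fin n → ℝ := 1 + Pi.single p (-(∑ k, a k) / a p)
  have hx : a ⬝ᵥ x = 0 := by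
    simp [x, dotProduct_add, dotProduct_one, mul_div_cancel₀ _ hp.ne']
  have hone : (fun i => min (0 + x i) (1 + (0 : Fin n → ℝ) i)) = 1 := by
    ext i
    have hT : (0 : Fin n → ℝ) ≤ Pi.single p (-(∑ k, a k) / a p) :=
      Pi.single_nonneg.2 (div_nonneg (by linarith) hp.le)
    simpa [x] using hT i
  have := hH x (by simp [hx]) 0 (by simp) 0 1 (by norm_num)
  rw [hone, one_mem_halfspace_iff] at this
  linarith

lemma tropConvex_halfspace_iff :
    TropConvex (halfspace a) ↔
      (∀ k, a k ≤ 0) ∨ ∃ j : Fin n, (∀ k, k ≠ j → a k ≤ 0) ∧ 0 ≤ ∑ k, a k := by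
  refine ⟨fun hH => ?_, ?_⟩
  · by_cases ha : ∀ k, a k ≤ 0
    · exact Or.inl ha
    · obtain ⟨p, hp⟩ : ∃ p, 0 < a p := by simpa using ha
      exact Or.inr ⟨p, fun k hk => nonpos_of_tropConvex_halfspace hH hp hk,
        sum_nonneg_of_tropConvex_halfspace hH hp⟩
  · rintro (ha | ⟨j, ha, hsum⟩)
    · exact tropConvex_halfspace_of_nonpos ha
    · exact tropConvex_halfspace_of_sum_nonneg ha hsum

end TropicalHalfspace

theorem tropically_convex_halfspace_iff_general (n : ℕ) (a : Fin n → ℝ)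
    (H : Set (Fin n → ℝ)) (hH : H = {x | 0 ≤ ∑ k, a k * x k}) :
    (TropConvex H ↔ ∃ j : Fin (n + 1), sector j ⊆ H) ∧
    ((∃ j : Fin (n + 1), sector j ⊆ H) ↔
      ((∀ k, a k ≤ 0) ∨ ∃ j : Fin n, (∀ k, k ≠ j → a k ≤ 0) ∧ 0 ≤ ∑ k, a k)) := by
  obtain rfl : H = halfspace a := hH
  exact ⟨tropConvex_halfspace_iff.trans exists_sector_subset_halfspace_iff.symm,
    exists_sector_subset_halfspace_iff⟩

theorem tropically_convex_halfspace_iff (n : ℕ) (a : Fin n → ℝ) (ha : a ≠ 0)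
    (H : Set (Fin n → ℝ)) (hH : H = {x | 0 ≤ ∑ k, a k * x k}) :
    (TropConvex H ↔ ∃ j : Fin (n + 1), sector j ⊆ H) ∧
    ((∃ j : Fin (n + 1), sector j ⊆ H) ↔
      ((∀ k, a k ≤ 0) ∨ ∃ j : Fin n, (∀ k, k ≠ j → a k ≤ 0) ∧ 0 ≤ ∑ k, a k)) :=
  tropically_convex_halfspace_iff_general n a H hH
end

section
/- A linear subspace L of ℝ^n is tropically convex if and only if there exist a set A of pairs (i, j) of indices with i ≠ j and a set B of indices k such that L = {x ∈ ℝ^n : x_i = x_j for all (i, j) ∈ A, and x_k = 0 for all k ∈ B} (the empty intersection being all of ℝ^n). -/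
/-!
A tropically convex subspace `L` is closed under pointwise `min` and under the clamps
`x ↦ max (min x c) 0` for `c ≥ 0`. If `0 < δ` is below the gap between a value `v > 0` of `x ∈ L`
and its other values, the second difference of clamps at `v` with step `δ` is `δ` times the
indicator of the level set `{x = v}`; hence the indicators of all nonzero level sets of elements
of `L` lie in `L`. Intersections and differences of these cut out each class of coordinates on
which all of `L` agrees (away from the common zeros of `L`), and a vector constant on these classes
and vanishing on the common zeros is a combination of indicators of unions of classes.
-/

open Set Filter Topology

lemma exists_pos_le_abs_sub_of_ne {ι : Type*} [Finite ι] (x : ι → ℝ) (v : ℝ) {ε : ℝ}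
    (hε : 0 < ε) : ∃ δ, 0 < δ ∧ δ ≤ ε ∧ ∀ k, x k ≠ v → δ ≤ |x k - v| := by
  have hgap : ∀ k, ∀ᶠ δ in 𝓝 (0 : ℝ), x k ≠ v → δ ≤ |x k - v| := fun k => by
    by_cases h : x k = v
    · simp [h]
    · exact (eventually_le_nhds (abs_pos.2 (sub_ne_zero.2 h))).mono fun _ h' _ => h'
  exact (eventually_mem_nhdsWithin.and <| (eventually_le_nhds hε).and (eventually_all.2 hgap)
    |>.filter_mono nhdsWithin_le_nhds).exists (f := 𝓝[>] (0 : ℝ))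

lemma clamp_tent_eq {t v δ : ℝ} (hδ : 0 < δ) (hδv : δ ≤ v) (ht : t ≠ v → δ ≤ |t - v|) :
    2 * max (min t v) 0 - max (min t (v - δ)) 0 - max (min t (v + δ)) 0 =
      if t = v then δ else 0 := by
  split_ifs with h
  · subst h
    rw [min_self, min_eq_right (by linarith), min_eq_left (by linarith),
      max_eq_left (by linarith), max_eq_left (by linarith)]
    ring
  · rcases le_abs'.1 (ht h) with h' | h' <;>
    · simp only [min_def, max_def]
      split_ifs <;> linarith

section

variable {ι : Type*} {L : Submodule ℝ (ι → ℝ)}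

def coordClass (L : Submodule ℝ (ι → ℝ)) (i : ι) : Set ι :=
  {j | ∀ x ∈ L, x j = x i}

lemma mem_coordClass_self (i : ι) : i ∈ coordClass L i := fun _ _ => rfl

lemma coordClass_subset_of_indicator_mem {T : Set ι} (hT : T.indicator 1 ∈ L) {i : ι}
    (hi : i ∈ T) : coordClass L i ⊆ T := fun j hj => by
  have := hj _ hT
  by_contra hjT
  simp [indicator_of_mem hi, indicator_of_notMem hjT] at this

end

namespace TropConvex

variable {n : ℕ} {L : Submodule ℝ (Fin n → ℝ)} {x y : Fin n → ℝ}

lemma min_mem (hL : TropConvex (L : Set (Fin n → ℝ))) (hx : x ∈ L) (hy : y ∈ L) :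
    (fun i => min (x i) (y i)) ∈ L := by
  simpa using hL x hx y hy 0 0 (min_self 0)

lemma clamp_mem (hL : TropConvex (L : Set (Fin n → ℝ))) (hx : x ∈ L) {c : ℝ} (hc : 0 ≤ c) :
    (fun i => max (min (x i) c) 0) ∈ L := by
  have hmin : (fun i => min (x i) c) ∈ L := by
    simpa using hL x hx 0 L.zero_mem 0 c (min_eq_left hc)
  convert L.neg_mem (hL.min_mem (L.neg_mem hmin) L.zero_mem) using 1
  ext i
  simp only [Pi.neg_apply, Pi.zero_apply]
  rw [← neg_zero, min_neg_neg, neg_neg, neg_zero]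

lemma indicator_inter_mem (hL : TropConvex (L : Set (Fin n → ℝ))) {s t : Set (Fin n)}
    (hs : s.indicator 1 ∈ L) (ht : t.indicator 1 ∈ L) : (s ∩ t).indicator 1 ∈ L := by
  convert hL.min_mem hs ht using 1
  ext k
  by_cases hks : k ∈ s <;> by_cases hkt : k ∈ t <;> simp [hks, hkt]

lemma indicator_union_mem (hL : TropConvex (L : Set (Fin n → ℝ))) {s t : Set (Fin n)}
    (hs : s.indicator 1 ∈ L) (ht : t.indicator 1 ∈ L) : (s ∪ t).indicator 1 ∈ L := by
  rw [← add_sub_cancel_right ((s ∪ t).indicator 1) ((s ∩ t).indicator 1),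
    indicator_union_add_inter]
  exact L.sub_mem (L.add_mem hs ht) (hL.indicator_inter_mem hs ht)

lemma indicator_sdiff_mem (hL : TropConvex (L : Set (Fin n → ℝ))) {s t : Set (Fin n)}
    (hs : s.indicator 1 ∈ L) (ht : t.indicator 1 ∈ L) : (s \ t).indicator 1 ∈ L := by
  rw [← sdiff_inter_self_eq_sdiff, indicator_sdiff' inter_subset_right]
  exact L.sub_mem hs (hL.indicator_inter_mem ht hs)

lemma indicator_level_mem_of_pos (hL : TropConvex (L : Set (Fin n → ℝ))) (hx : x ∈ L)
    {v : ℝ} (hv : 0 < v) : {k | x k = v}.indicator 1 ∈ L := by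
  obtain ⟨δ, hδ, hδv, hgap⟩ := exists_pos_le_abs_sub_of_ne x v hv
  have htent : {k | x k = v}.indicator 1 = δ⁻¹ • ((2 : ℝ) • (fun i => max (min (x i) v) 0) -
      (fun i => max (min (x i) (v - δ)) 0) - (fun i => max (min (x i) (v + δ)) 0)) := by
    ext k
    simp only [Pi.smul_apply, Pi.sub_apply, smul_eq_mul, clamp_tent_eq hδ hδv (hgap k)]
    by_cases hk : x k = v <;> simp [hk, hδ.ne']
  rw [htent]
  exact L.smul_mem _ <| L.sub_mem (L.sub_mem (L.smul_mem _ (hL.clamp_mem hx hv.le))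
    (hL.clamp_mem hx (by linarith))) (hL.clamp_mem hx (by linarith))

lemma indicator_level_mem (hL : TropConvex (L : Set (Fin n → ℝ))) (hx : x ∈ L)
    {v : ℝ} (hv : v ≠ 0) : {k | x k = v}.indicator 1 ∈ L := by
  rcases hv.lt_or_gt with hv | hv
  · simpa [neg_eq_iff_eq_neg] using hL.indicator_level_mem_of_pos (L.neg_mem hx) (neg_pos.2 hv)
  · exact hL.indicator_level_mem_of_pos hx hv

lemma exists_indicator_mem_separating (hL : TropConvex (L : Set (Fin n → ℝ))) {z : Fin n → ℝ}
    (hz : z ∈ L) {i j : Fin n} (hzi : z i ≠ 0) (hx : x ∈ L) (hxj : x j ≠ x i) :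
    ∃ T : Set (Fin n), T.indicator 1 ∈ L ∧ i ∈ T ∧ j ∉ T := by
  by_cases hxi : x i = 0
  · refine ⟨{k | z k = z i} \ {k | x k = x j}, hL.indicator_sdiff_mem
      (hL.indicator_level_mem hz hzi) (hL.indicator_level_mem hx (hxi ▸ hxj)), ?_, by simp⟩
    simpa [hxi, eq_comm] using hxi ▸ hxj
  · exact ⟨{k | x k = x i}, hL.indicator_level_mem hx hxi, rfl, hxj⟩

lemma indicator_coordClass_mem (hL : TropConvex (L : Set (Fin n → ℝ))) {z : Fin n → ℝ}
    (hz : z ∈ L) {i : Fin n} (hzi : z i ≠ 0) : (coordClass L i).indicator 1 ∈ L := by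
  have hsep : ∀ j, ∃ T : Set (Fin n),
      T.indicator 1 ∈ L ∧ i ∈ T ∧ (j ∈ T → j ∈ coordClass L i) := by
    intro j
    by_cases hj : j ∈ coordClass L i
    · exact ⟨_, hL.indicator_level_mem hz hzi, rfl, fun _ => hj⟩
    · obtain ⟨x, hx, hxj⟩ : ∃ x ∈ L, x j ≠ x i := by simpa [coordClass] using hj
      obtain ⟨T, hT, hiT, hjT⟩ := hL.exists_indicator_mem_separating hz hzi hx hxj
      exact ⟨T, hT, hiT, fun h => absurd h hjT⟩
  choose T hTL hiT hTj using hsep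
  have hclass : coordClass L i = Finset.univ.inf' (Finset.univ_nonempty_iff.2 ⟨i⟩) T := by
    rw [Finset.inf'_eq_inf, Finset.inf_set_eq_iInter]
    ext k
    simp only [Finset.mem_univ, iInter_true, mem_iInter]
    exact ⟨fun hk j => coordClass_subset_of_indicator_mem (hTL j) (hiT j) hk,
      fun hk => hTj k (hk k)⟩
  rw [hclass]
  exact Finset.inf'_mem {T : Set (Fin n) | T.indicator 1 ∈ L}
    (fun _ hs _ ht => hL.indicator_inter_mem hs ht) _ _ _ fun j _ => hTL j

lemma indicator_sup_coordClass_mem (hL : TropConvex (L : Set (Fin n → ℝ)))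
    {s : Finset (Fin n)} (hs : ∀ i ∈ s, ∃ z ∈ L, z i ≠ 0) :
    (s.sup (coordClass L)).indicator 1 ∈ L := by
  refine Finset.sup_mem {T : Set (Fin n) | T.indicator 1 ∈ L}
    (by rw [bot_eq_empty, mem_ofPred_eq, indicator_empty]; exact L.zero_mem)
    (fun _ hs _ ht => hL.indicator_union_mem hs ht) _ _ fun i hi => ?_
  obtain ⟨z, hz, hzi⟩ := hs i hi
  exact hL.indicator_coordClass_mem hz hzi

lemma mem_of_forall_coordClass (hL : TropConvex (L : Set (Fin n → ℝ)))
    (hclass : ∀ i, ∀ j ∈ coordClass L i, y j = y i)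
    (hzero : ∀ k, (∀ x ∈ L, x k = 0) → y k = 0) : y ∈ L := by
  classical
  have hdecomp : y = ∑ v ∈ Finset.univ.image y, v • {k | y k = v}.indicator 1 := by
    ext k
    simp [Finset.sum_apply, indicator_apply]
  rw [hdecomp]
  refine Submodule.sum_mem _ fun v hv => ?_
  obtain ⟨i₀, -, rfl⟩ := Finset.mem_image.1 hv
  by_cases hv0 : y i₀ = 0
  · simp [hv0]
  have hlevel : {k | y k = y i₀} = (Finset.univ.filter fun i => y i = y i₀).sup (coordClass L) := by
    rw [Finset.sup_set_eq_biUnion]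
    ext k
    simp only [Finset.mem_filter, Finset.mem_univ, true_and, mem_iUnion, exists_prop]
    exact ⟨fun hk => ⟨k, hk, mem_coordClass_self k⟩, fun ⟨i, hi, hk⟩ => (hclass i k hk).trans hi⟩
  rw [hlevel]
  refine L.smul_mem _ (hL.indicator_sup_coordClass_mem fun i hi => ?_)
  by_contra! h
  exact hv0 ((Finset.mem_filter.1 hi).2 ▸ hzero i h)

end TropConvex

lemma tropConvex_setOf_coord_eq {n : ℕ} (A : Set (Fin n × Fin n)) (B : Set (Fin n)) :
    TropConvex {x : Fin n → ℝ | (∀ p ∈ A, x p.1 = x p.2) ∧ ∀ k ∈ B, x k = 0} := by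
  rintro x ⟨hxA, hxB⟩ y ⟨hyA, hyB⟩ a b hab
  exact ⟨fun p hp => by simp only [hxA p hp, hyA p hp],
    fun k hk => by simp only [hxB k hk, hyB k hk, add_zero, hab]⟩

theorem tropically_convex_linear_subspace_iff (n : ℕ) (L : Submodule ℝ (Fin n → ℝ)) :
    TropConvex (L : Set (Fin n → ℝ)) ↔
      ∃ (A : Set (Fin n × Fin n)) (B : Set (Fin n)),
        (∀ p ∈ A, p.1 ≠ p.2) ∧
        (L : Set (Fin n → ℝ)) =
          {x | (∀ p ∈ A, x p.1 = x p.2) ∧ ∀ k ∈ B, x k = 0} := by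
  constructor
  · intro hL
    refine ⟨{p | p.1 ≠ p.2 ∧ ∀ x ∈ L, x p.1 = x p.2}, {k | ∀ x ∈ L, x k = 0},
      fun p hp => hp.1, ?_⟩
    ext y
    refine ⟨fun hy => ⟨fun p hp => hp.2 y hy, fun k hk => hk y hy⟩, fun ⟨hA, hB⟩ => ?_⟩
    refine hL.mem_of_forall_coordClass (fun i j hj => ?_) hB
    by_cases hji : j = i
    · rw [hji]
    · exact hA (j, i) ⟨hji, hj⟩
  · rintro ⟨A, B, -, hL⟩
    rw [hL]
    exact tropConvex_setOf_coord_eq A B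
end

section
/- Let I be a finite index set, and for each i ∈ I let a^i ∈ ℝ^n with a^i ≠ 0 and c_i ∈ ℝ, defining the closed halfspace H_i = {x ∈ ℝ^n : Σ_{k=1}^n a^i_k x_k ≥ c_i}. Let P = ⋂_{i ∈ I} H_i. Assume P is full-dimensional (its topological interior is nonempty) and the representation is irredundant: for every i ∈ I, ⋂_{j ∈ I, j ≠ i} H_j ≠ P. Then P is tropically convex if and only if every H_i is tropically convex. -/
/-!
If `P` is tropically convex but some `H i` is not, pick `x, y ∈ H i` with a tropical combination
`z ∉ H i`. Full-dimensionality and irredundancy give a point `p` of the facet `a i ⬝ᵥ p = c i`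
lying strictly inside every other `H j`, so `P` agrees with `H i` near `p`. Homotheties centred
at `p` with positive ratio preserve `H i` and, after scaling the coefficients by the ratio, commute
with tropical combinations; shrinking `x`, `y`, `z` towards `p` thus violates the tropical
convexity of `P`.
-/

open Matrix Filter Topology

section

variable {n : ℕ}

def tropComb (a b : ℝ) (x y : Fin n → ℝ) : Fin n → ℝ := fun k => min (a + x k) (b + y k)

theorem TropConvex.iInter {ι : Sort*} {U : ι → Set (Fin n → ℝ)} (hU : ∀ i, TropConvex (U i)) :
    TropConvex (⋂ i, U i) := by
  intro x hx y hy a b hab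
  simp only [Set.mem_iInter] at hx hy ⊢
  exact fun i => hU i x (hx i) y (hy i) a b hab

theorem homothety_tropComb (p x y : Fin n → ℝ) {s : ℝ} (hs : 0 ≤ s) (a b : ℝ) :
    tropComb (s * a) (s * b) (AffineMap.homothety p s x) (AffineMap.homothety p s y) =
      AffineMap.homothety p s (tropComb a b x y) := by
  ext k
  simp only [tropComb, AffineMap.homothety_apply, vsub_eq_sub, vadd_eq_add, Pi.add_apply,
    Pi.smul_apply, Pi.sub_apply, smul_eq_mul]
  have shift : ∀ t v, s * t + (s * (v - p k) + p k) = s * (t + v) + (p k - s * p k) :=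
    fun _ _ => by ring
  rw [shift, shift, min_add_add_right, ← mul_min_of_nonneg _ _ hs]
  ring

theorem TropConvex.of_eventuallyEq_of_homothety_preimage {U C : Set (Fin n → ℝ)} {p : Fin n → ℝ}
    (hU : TropConvex U) (hUC : U =ᶠ[𝓝 p] C)
    (hC : ∀ s : ℝ, 0 < s → AffineMap.homothety p s ⁻¹' C = C) : TropConvex C := by
  intro x hx y hy a b hab
  have near : ∀ v, ∀ᶠ s in 𝓝[>] (0 : ℝ),
      (AffineMap.homothety p s v ∈ U ↔ AffineMap.homothety p s v ∈ C) := by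
    intro v
    have hlim : Tendsto (fun s : ℝ => AffineMap.homothety p s v) (𝓝[>] 0) (𝓝 p) := by
      simp_rw [AffineMap.homothety_eq_lineMap]
      exact (AffineMap.lineMap_continuous.tendsto' 0 p (by simp)).mono_left nhdsWithin_le_nhds
    exact hlim.eventually (eventuallyEq_set.1 hUC)
  obtain ⟨s, ⟨hxs, hys, hzs⟩, hs⟩ :=
    ((near x).and ((near y).and (near _))).and self_mem_nhdsWithin |>.exists
  have hCs := hC s hs
  have hxU : AffineMap.homothety p s x ∈ U := hxs.2 (by rwa [← Set.mem_preimage, hCs])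
  have hyU : AffineMap.homothety p s y ∈ U := hys.2 (by rwa [← Set.mem_preimage, hCs])
  have hmin : min (s * a) (s * b) = 0 := by rw [← mul_min_of_nonneg _ _ hs.le, hab, mul_zero]
  have hzU : tropComb (s * a) (s * b) _ _ ∈ U := hU _ hxU _ hyU _ _ hmin
  rw [homothety_tropComb p x y hs.le] at hzU
  rw [← hCs]
  exact hzs.1 hzU

theorem homothety_preimage_halfspace {a p : Fin n → ℝ} {c s : ℝ} (hp : a ⬝ᵥ p = c) (hs : 0 < s) :
    AffineMap.homothety p s ⁻¹' {x | c ≤ a ⬝ᵥ x} = {x | c ≤ a ⬝ᵥ x} := by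
  ext x
  simp only [Set.mem_preimage, Set.mem_ofPred_eq, AffineMap.homothety_apply, vsub_eq_sub,
    vadd_eq_add, dotProduct_add, dotProduct_smul, dotProduct_sub, hp, smul_eq_mul,
    le_add_iff_nonneg_left, mul_nonneg_iff_of_pos_left hs, sub_nonneg]

theorem halfspace_mem_nhds {a p : Fin n → ℝ} {c : ℝ} (hp : c < a ⬝ᵥ p) :
    {x | c ≤ a ⬝ᵥ x} ∈ 𝓝 p := by
  have hcont : Continuous fun x : Fin n → ℝ => a ⬝ᵥ x := by fun_prop
  exact mem_of_superset ((isOpen_lt continuous_const hcont).mem_nhds hp)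
    (Set.ofPred_subset_ofPred.2 fun _ => le_of_lt)

theorem lt_dotProduct_of_mem_interior {a u : Fin n → ℝ} (ha : a ≠ 0) {c : ℝ}
    (hu : u ∈ interior {x | c ≤ a ⬝ᵥ x}) : c < a ⬝ᵥ u := by
  let f := dotProductBilin ℝ ℝ a
  have hf : Function.Surjective f := fun t =>
    ⟨(t / (a ⬝ᵥ a)) • a, by simp [f, dotProduct_self_eq_zero.not.2 ha]⟩
  have hint := (f.isOpenMap_of_finiteDimensional hf).preimage_interior_eq_interior_preimage
    f.continuous_of_finiteDimensional (Set.Ici c)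
  rw [interior_Ici] at hint
  exact (hint ▸ hu : u ∈ f ⁻¹' Set.Ioi c)

theorem exists_dotProduct_eq_of_lt_of_le {I : Type*} (a : I → Fin n → ℝ) (c : I → ℝ) {i : I}
    {u w : Fin n → ℝ} (hu : ∀ j, c j < a j ⬝ᵥ u) (hw : ∀ j ≠ i, c j ≤ a j ⬝ᵥ w)
    (hwi : a i ⬝ᵥ w < c i) :
    ∃ p, a i ⬝ᵥ p = c i ∧ ∀ j ≠ i, c j < a j ⬝ᵥ p := by
  have hgap : 0 < a i ⬝ᵥ u - a i ⬝ᵥ w := by linarith [hu i]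
  set t := (a i ⬝ᵥ u - c i) / (a i ⬝ᵥ u - a i ⬝ᵥ w) with ht
  have ht0 : 0 < t := div_pos (by linarith [hu i]) hgap
  have ht1 : t < 1 := (div_lt_one hgap).2 (by linarith)
  have hdot : ∀ b, b ⬝ᵥ AffineMap.lineMap u w t = (1 - t) * b ⬝ᵥ u + t * b ⬝ᵥ w := fun b => by
    simp [AffineMap.lineMap_apply_module, dotProduct_add, dotProduct_smul]
  refine ⟨AffineMap.lineMap u w t, ?_, fun j hj => ?_⟩
  · rw [hdot, ht]
    field_simp
    ring
  · rw [hdot]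
    nlinarith [hu j, hw j hj]

theorem exists_facet_point_of_irredundant {I : Type*} {a : I → Fin n → ℝ} (ha : ∀ i, a i ≠ 0)
    {c : I → ℝ} (hfull : (interior (⋂ i, {x | c i ≤ a i ⬝ᵥ x})).Nonempty) {i : I}
    (hirr : (⋂ j, ⋂ _ : j ≠ i, {x | c j ≤ a j ⬝ᵥ x}) ≠ ⋂ j, {x | c j ≤ a j ⬝ᵥ x}) :
    ∃ p, a i ⬝ᵥ p = c i ∧ ∀ j ≠ i, c j < a j ⬝ᵥ p := by
  obtain ⟨u, hu⟩ := hfull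
  have hu' : ∀ j, c j < a j ⬝ᵥ u := fun j =>
    lt_dotProduct_of_mem_interior (ha j) (interior_mono (Set.iInter_subset _ j) hu)
  obtain ⟨w, hw, hwP⟩ := Set.exists_of_ssubset
    ((Set.iInter_mono fun j => Set.subset_iInter fun _ => subset_rfl).ssubset_of_ne hirr.symm)
  simp only [Set.mem_iInter, Set.mem_ofPred_eq] at hw hwP
  have hwi : a i ⬝ᵥ w < c i := by
    by_contra! h
    refine hwP fun j => ?_
    rcases eq_or_ne j i with rfl | hj
    exacts [h, hw j hj]
  exact exists_dotProduct_eq_of_lt_of_le a c hu' hw hwi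

theorem iInter_eventuallyEq_of_mem_nhds {X I : Type*} [TopologicalSpace X] [Finite I]
    {S : I → Set X} {p : X} {i : I} (hS : ∀ j ≠ i, S j ∈ 𝓝 p) : (⋂ j, S j) =ᶠ[𝓝 p] S i := by
  have hothers : ∀ᶠ x in 𝓝 p, ∀ j, j ≠ i → x ∈ S j := eventually_all.2 fun j => by
    rcases eq_or_ne j i with rfl | hj
    · exact Eventually.of_forall fun _ h => absurd rfl h
    · exact mem_of_superset (hS j hj) fun _ hx _ => hx
  refine eventuallyEq_set.2 (hothers.mono fun x hx => ?_)
  simp only [Set.mem_iInter]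
  refine ⟨fun h => h i, fun h j => ?_⟩
  rcases eq_or_ne j i with rfl | hj
  exacts [h, hx j hj]

end

theorem tropically_convex_polyhedron_iff (n : ℕ) (I : Type) [Fintype I]
    (a : I → Fin n → ℝ) (ha : ∀ i, a i ≠ 0) (c : I → ℝ)
    (H : I → Set (Fin n → ℝ))
    (hH : ∀ i, H i = {x | c i ≤ ∑ k, a i k * x k})
    (P : Set (Fin n → ℝ)) (hP : P = ⋂ i, H i)
    (hfull : (interior P).Nonempty)
    (hirr : ∀ i : I, (⋂ j : I, ⋂ _ : j ≠ i, H j) ≠ P) :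
    TropConvex P ↔ ∀ i, TropConvex (H i) := by
  obtain rfl : H = fun i => {x | c i ≤ a i ⬝ᵥ x} := funext hH
  subst hP
  refine ⟨fun hconv i => ?_, TropConvex.iInter⟩
  obtain ⟨p, hpi, hpj⟩ := exists_facet_point_of_irredundant ha hfull (hirr i)
  exact hconv.of_eventuallyEq_of_homothety_preimage
    (iInter_eventuallyEq_of_mem_nhds fun j hj => halfspace_mem_nhds (hpj j hj))
    fun _ hs => homothety_preimage_halfspace hpi hs
end
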